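/- Let λ be a partition, and suppose Q : λ̄ × U(λ) → ℚ(q,t) satisfies the exterior (q,t)-hook-walk recursion: for each ν ∈ U(λ), Q(ν|c) = 1 if c is the outer corner ν/λ; Q(ν|c) = 0 if c is an outer corner of λ with λ∪{c} ≠ ν; and Q(ν|c) = ∑_{c' ∈ arm_λ(c) ∪ leg_λ(c)} P(c→c')·Q(ν|c') if c is not an outer corner of λ. Then for every cell c = (x,y) ∈ λ̄ with x > λ_1 and y > λ'_1, and every ν ∈ U(λ), Q(ν|c) = t^{n(ν/λ)} · α_{ν/λ}(q,t). -/

import Mathlib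

open Finset

noncomputable section

/-- The field `ℚ(q,t)` of rational functions in two variables over `ℚ`. -/
abbrev K : Type := FractionRing (MvPolynomial (Fin 2) ℚ)

def q : K := algebraMap (MvPolynomial (Fin 2) ℚ) K (MvPolynomial.X 0)
def t : K := algebraMap (MvPolynomial (Fin 2) ℚ) K (MvPolynomial.X 1)

/-- Arm-length of the cell `c = (row, col)` of `κ` (cells are 0-indexed, Mathlib convention). -/
def arm (κ : YoungDiagram) (c : ℕ × ℕ) : ℕ := κ.rowLen c.1 - c.2 - 1

/-- Leg-length of the cell `c = (row, col)` of `κ`. -/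
def leg (κ : YoungDiagram) (c : ℕ × ℕ) : ℕ := κ.colLen c.2 - c.1 - 1

/-- Hook-length of the cell `c` of `κ`. -/
def hook (κ : YoungDiagram) (c : ℕ × ℕ) : ℕ := arm κ c + leg κ c + 1

/-- `Covers μ λ` means `μ ⋖ λ` in Young's lattice. -/
def Covers (μ l : YoungDiagram) : Prop :=
  μ.cells ⊆ l.cells ∧ l.cells.card = μ.cells.card + 1

open scoped Classical in
/-- For `μ ⋖ λ`, the set `R_{λ/μ}` of cells of `μ` in the same row as the unique cell of `λ/μ`. -/
def Rset (μ l : YoungDiagram) : Finset (ℕ × ℕ) :=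
  μ.cells.filter fun c => ∃ d ∈ l.cells \ μ.cells, c.1 = d.1

open scoped Classical in
/-- For `μ ⋖ λ`, the set `C_{λ/μ}` of cells of `μ` in the same column as the unique cell of `λ/μ`. -/
def Cset (μ l : YoungDiagram) : Finset (ℕ × ℕ) :=
  μ.cells.filter fun c => ∃ d ∈ l.cells \ μ.cells, c.2 = d.2

/-- `[i,j] = 1 - q^i t^j`. -/
def brk (i j : ℕ) : K := 1 - q ^ i * t ^ j

/-- `b_κ(c) = (1 - q^{a} t^{ℓ+1})/(1 - q^{a+1} t^{ℓ})`. -/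
def bcell (κ : YoungDiagram) (c : ℕ × ℕ) : K :=
  brk (arm κ c) (leg κ c + 1) / brk (arm κ c + 1) (leg κ c)

/-- `ψ_{λ/μ}(q,t)` for `μ ⋖ λ`. -/
def ψqt (μ l : YoungDiagram) : K := ∏ c ∈ Rset μ l, bcell μ c / bcell l c

/-- `φ_{λ/μ}(q,t)` for `μ ⋖ λ`. -/
def φqt (μ l : YoungDiagram) : K :=
  ((1 - t) / (1 - q)) * ∏ c ∈ Cset μ l, bcell l c / bcell μ c

/-- `α_{ν/λ}(q,t)` for `λ ⋖ ν`. -/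
def alph (l ν : YoungDiagram) : K :=
  (∏ c ∈ Rset l ν, brk (arm l c) (leg l c + 1) / brk (arm ν c) (leg ν c + 1)) *
  (∏ c ∈ Cset l ν, brk (arm l c + 1) (leg l c) / brk (arm ν c + 1) (leg ν c))

/-- `ᾱ_{ν/λ}(q,t)` for `λ ⋖ ν`. -/
def alphBar (l ν : YoungDiagram) : K :=
  (∏ c ∈ Rset l ν, brk (arm l c + 1) (leg l c) / brk (arm ν c + 1) (leg ν c)) *
  (∏ c ∈ Cset l ν, brk (arm l c) (leg l c + 1) / brk (arm ν c) (leg ν c + 1))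

/-- `n(κ) = ∑_{c ∈ κ} ℓ_κ(c)` (as an integer). -/
def nstat (κ : YoungDiagram) : ℤ := ∑ c ∈ κ.cells, (leg κ c : ℤ)

/-- `n'(κ) = ∑_{c ∈ κ} a_κ(c)` (as an integer). -/
def nstat' (κ : YoungDiagram) : ℤ := ∑ c ∈ κ.cells, (arm κ c : ℤ)


/-- The (exterior) arm of a cell `c = (row, col) ∉ λ`: the cells of the same row strictly
between the end of row `c.1` of `λ` and `c`. -/
def extArm (l : YoungDiagram) (c : ℕ × ℕ) : Finset (ℕ × ℕ) :=
  (Finset.Ico (l.rowLen c.1) c.2).image fun j => (c.1, j)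

/-- The (exterior) leg of a cell `c = (row, col) ∉ λ`: the cells of the same column strictly
between the top of column `c.2` of `λ` and `c`. -/
def extLeg (l : YoungDiagram) (c : ℕ × ℕ) : Finset (ℕ × ℕ) :=
  (Finset.Ico (l.colLen c.2) c.1).image fun i => (i, c.2)

/-- `a(c) = |arm_λ(c)|` for `c ∉ λ`. -/
def extA (l : YoungDiagram) (c : ℕ × ℕ) : ℕ := c.2 - l.rowLen c.1

/-- `ℓ(c) = |leg_λ(c)|` for `c ∉ λ`. -/
def extL (l : YoungDiagram) (c : ℕ × ℕ) : ℕ := c.1 - l.colLen c.2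

/-- The step probability `P(c → c')` of the exterior `(q,t)`-hook walk, for
`c' ∈ arm_λ(c) ∪ leg_λ(c)`: if `c' = (x−i, y)` is in the arm of `c` (same row) the probability
is `q^{a(c)−i} t^{ℓ(c)} (1−q)/(1−q^{a(c)} t^{ℓ(c)})`, and if `c' = (x, y−j)` is in the leg
(same column) it is `t^{j−1} (1−t)/(1−q^{a(c)} t^{ℓ(c)})`. -/
def stepP (l : YoungDiagram) (c c' : ℕ × ℕ) : K :=
  if c'.1 = c.1 then
    q ^ (c'.2 - l.rowLen c.1) * t ^ extL l c * (1 - q) / (1 - q ^ extA l c * t ^ extL l c)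
  else
    t ^ (c.1 - c'.1 - 1) * (1 - t) / (1 - q ^ extA l c * t ^ extL l c)


/-!
Write `ν = λ ∪ {(r, k)}` (cells are `(row, column)`). Every step of the walk moves strictly
left or down, so by induction on `x + y` the recursion determines `Q(ν | ·)` from its values at
the outer corners of `λ`, and it suffices to exhibit one solution. The walk can only exit at
`(r, k)` from a cell `(x, y)` with `r ≤ x` and `k ≤ y`, and there the exit probability factors
as `t ^ (r - λ'_y) · R(λ_x) · C(λ'_y)`, where `R(m)` and `C(m)` are the parts of the row and
column products of `α_{ν/λ}` over the columns `≥ m` of row `r` and the rows `≥ m` of column `k`.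
That this is a solution comes down to two telescoping sums, along the leg and along the arm of
`(x, y)`: between consecutive row ends the column lengths are constant, and vice versa.
At a cell beyond the first row and column the formula reads `t ^ r · α_{ν/λ}`, and
`n(ν/λ) = r`.
-/

theorem brk_ne_zero {i j : ℕ} (h : i + j ≠ 0) : brk i j ≠ 0 := by
  have hpoly : (1 - MvPolynomial.X 0 ^ i * MvPolynomial.X 1 ^ j : MvPolynomial (Fin 2) ℚ) ≠ 0 := by
    intro h0
    have h1 := congrArg MvPolynomial.constantCoeff h0
    simp only [map_sub, map_one, map_mul, map_pow, MvPolynomial.constantCoeff_X, map_zero] at h1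
    obtain hi | hj : i ≠ 0 ∨ j ≠ 0 := by omega
    · simp [zero_pow hi] at h1
    · simp [zero_pow hj] at h1
  have hbrk : brk i j = algebraMap (MvPolynomial (Fin 2) ℚ) K
      (1 - MvPolynomial.X 0 ^ i * MvPolynomial.X 1 ^ j) := by
    simp [brk, q, t]
  rw [hbrk]
  exact (map_ne_zero_iff _ (IsFractionRing.injective _ K)).mpr hpoly

theorem Finset.prod_Ico_div_of_ne_zero {F : Type*} [Field F] {f : ℕ → F} (hf : ∀ j, f j ≠ 0)
    {m n : ℕ} (hmn : m ≤ n) : ∏ j ∈ Ico m n, f (j + 1) / f j = f n / f m := by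
  simpa using congrArg Units.val (prod_Ico_div (f := fun j => Units.mk0 (f j) (hf j)) hmn)

namespace YoungDiagram

variable {μ : YoungDiagram}

theorem rowLen_le_of_notMem {i j : ℕ} (h : (i, j) ∉ μ) : μ.rowLen i ≤ j :=
  not_lt.mp (mt mem_iff_lt_rowLen.mpr h)

theorem colLen_le_of_notMem {i j : ℕ} (h : (i, j) ∉ μ) : μ.colLen j ≤ i :=
  not_lt.mp (mt mem_iff_lt_colLen.mpr h)

theorem colLen_eq_of_rowLen_le_of_lt {x j : ℕ} (h1 : μ.rowLen (x + 1) ≤ j)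
    (h2 : j < μ.rowLen x) : μ.colLen j = x + 1 := by
  have hin : x < μ.colLen j := mem_iff_lt_colLen.mp (mem_iff_lt_rowLen.mpr h2)
  have hout : μ.colLen j ≤ x + 1 := colLen_le_of_notMem (mt mem_iff_lt_rowLen.mp (by omega))
  omega

theorem rowLen_eq_of_colLen_le_of_lt {y i : ℕ} (h1 : μ.colLen (y + 1) ≤ i)
    (h2 : i < μ.colLen y) : μ.rowLen i = y + 1 := by
  rw [← colLen_transpose]
  exact colLen_eq_of_rowLen_le_of_lt (by rwa [rowLen_transpose]) (by rwa [rowLen_transpose])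

section OuterCorner

variable {ν : YoungDiagram} {r k : ℕ}

theorem mem_iff_of_cells_eq_insert (hν : ν.cells = insert (r, k) μ.cells) {c : ℕ × ℕ} :
    c ∈ ν ↔ c = (r, k) ∨ c ∈ μ := by
  rw [← mem_cells, hν, Finset.mem_insert, mem_cells]

theorem transpose_cells_eq_insert (hν : ν.cells = insert (r, k) μ.cells) :
    ν.transpose.cells = insert (k, r) μ.transpose.cells := by
  ext ⟨i, j⟩
  simp [mem_transpose, mem_iff_of_cells_eq_insert hν, and_comm]

theorem rowLen_insert_of_ne (hν : ν.cells = insert (r, k) μ.cells) {i : ℕ} (hi : i ≠ r) :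
    ν.rowLen i = μ.rowLen i := by
  refine eq_of_forall_lt_iff fun j => ?_
  rw [← mem_iff_lt_rowLen, mem_iff_of_cells_eq_insert hν, ← mem_iff_lt_rowLen]
  simp [hi]

theorem colLen_insert_of_ne (hν : ν.cells = insert (r, k) μ.cells) {j : ℕ} (hj : j ≠ k) :
    ν.colLen j = μ.colLen j := by
  rw [← rowLen_transpose, ← rowLen_transpose]
  exact rowLen_insert_of_ne (transpose_cells_eq_insert hν) hj

variable (hd : (r, k) ∉ μ.cells) (hν : ν.cells = insert (r, k) μ.cells)
include hd hν

theorem rowLen_eq_of_cells_eq_insert : μ.rowLen r = k := by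
  have hrk : (r, k) ∈ ν := (mem_iff_of_cells_eq_insert hν).mpr (.inl rfl)
  refine eq_of_forall_lt_iff fun j => ⟨fun hj => ?_, fun hj => ?_⟩
  · by_contra! hkj
    exact hd ((mem_cells _).mpr (μ.up_left_mem le_rfl hkj (mem_iff_lt_rowLen.mpr hj)))
  · rcases (mem_iff_of_cells_eq_insert hν).mp (ν.up_left_mem le_rfl hj.le hrk) with h | h
    · simp only [Prod.mk.injEq] at h
      omega
    · exact mem_iff_lt_rowLen.mp h

theorem rowLen_insert_self : ν.rowLen r = k + 1 := by
  refine eq_of_forall_lt_iff fun j => ?_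
  rw [← mem_iff_lt_rowLen, mem_iff_of_cells_eq_insert hν, mem_iff_lt_rowLen,
    rowLen_eq_of_cells_eq_insert hd hν]
  simp only [Prod.mk.injEq, true_and]
  omega

theorem colLen_eq_of_cells_eq_insert : μ.colLen k = r := by
  rw [← rowLen_transpose]
  exact rowLen_eq_of_cells_eq_insert (by simpa [mem_transpose] using hd)
    (transpose_cells_eq_insert hν)

theorem colLen_insert_self : ν.colLen k = r + 1 := by
  rw [← rowLen_transpose]
  exact rowLen_insert_self (by simpa [mem_transpose] using hd) (transpose_cells_eq_insert hν)

end OuterCorner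

end YoungDiagram

theorem Covers.exists_cells_eq_insert {μ ν : YoungDiagram} (h : Covers μ ν) :
    ∃ d ∉ μ.cells, ν.cells = insert d μ.cells := by
  obtain ⟨d, hd, hν⟩ := Finset.exists_eq_insert_iff.mpr ⟨h.1, h.2.symm⟩
  exact ⟨d, hd, hν.symm⟩

theorem sum_extArm_union_extLeg {M : Type*} [AddCommMonoid M] (l : YoungDiagram) (x y : ℕ)
    (f : ℕ × ℕ → M) :
    ∑ c ∈ extArm l (x, y) ∪ extLeg l (x, y), f c =
      ∑ j ∈ Ico (l.rowLen x) y, f (x, j) + ∑ i ∈ Ico (l.colLen y) x, f (i, y) := by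
  have hdisj : Disjoint (extArm l (x, y)) (extLeg l (x, y)) := by
    simp only [extArm, extLeg, disjoint_left, mem_image, mem_Ico]
    rintro _ ⟨j, hj, rfl⟩ ⟨i, hi, hij⟩
    simp only [Prod.mk.injEq] at hij
    omega
  rw [sum_union hdisj, extArm, extLeg, sum_image (by simp), sum_image (by simp)]

theorem notMem_and_lt_of_mem_extArm_union_extLeg {l : YoungDiagram} {c c' : ℕ × ℕ}
    (h : c' ∈ extArm l c ∪ extLeg l c) : c' ∉ l.cells ∧ c'.1 + c'.2 < c.1 + c.2 := by
  simp only [extArm, extLeg, mem_union, mem_image, mem_Ico] at h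
  rcases h with ⟨j, hj, rfl⟩ | ⟨i, hi, rfl⟩
  · exact ⟨fun h => by have := YoungDiagram.mem_iff_lt_rowLen.mp h; omega, by simp; omega⟩
  · exact ⟨fun h => by have := YoungDiagram.mem_iff_lt_colLen.mp h; omega, by simp; omega⟩

def HookWalkHarmonic (l : YoungDiagram) (F : ℕ × ℕ → K) : Prop :=
  ∀ c ∉ l.cells, ¬(extA l c = 0 ∧ extL l c = 0) →
    F c = ∑ c' ∈ extArm l c ∪ extLeg l c, stepP l c c' * F c'

theorem HookWalkHarmonic.eqOn_of_eqOn_corners {l : YoungDiagram} {F G : ℕ × ℕ → K}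
    (hF : HookWalkHarmonic l F) (hG : HookWalkHarmonic l G)
    (hcorner : ∀ c ∉ l.cells, extA l c = 0 → extL l c = 0 → F c = G c) :
    ∀ c ∉ l.cells, F c = G c := by
  suffices ∀ n, ∀ c ∉ l.cells, c.1 + c.2 = n → F c = G c from fun c hc => this _ c hc rfl
  intro n
  induction n using Nat.strong_induction_on with
  | _ n ih =>
    intro c hc hn
    by_cases hcor : extA l c = 0 ∧ extL l c = 0
    · exact hcorner c hc hcor.1 hcor.2
    rw [hF c hc hcor, hG c hc hcor]
    refine sum_congr rfl fun c' hc' => ?_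
    obtain ⟨hc'l, hlt⟩ := notMem_and_lt_of_mem_extArm_union_extLeg hc'
    rw [ih _ (hn ▸ hlt) c' hc'l rfl]

def rowFactor (l : YoungDiagram) (r k m : ℕ) : K :=
  ∏ j ∈ Ico m k, brk (k - (j + 1)) (l.colLen j - r) / brk (k - j) (l.colLen j - r)

def colFactor (l : YoungDiagram) (r k m : ℕ) : K :=
  ∏ i ∈ Ico m r, brk (l.rowLen i - k) (r - (i + 1)) / brk (l.rowLen i - k) (r - i)

section Factors

variable {l : YoungDiagram} {r k : ℕ}

theorem rowFactor_mul_brk_succ (hrk : l.rowLen r = k) {x : ℕ} (hx : r ≤ x) :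
    rowFactor l r k (l.rowLen (x + 1)) * brk (k - l.rowLen (x + 1)) (x + 1 - r) =
      rowFactor l r k (l.rowLen x) * brk (k - l.rowLen x) (x + 1 - r) := by
  have hf : ∀ j, brk (k - j) (x + 1 - r) ≠ 0 := fun j => brk_ne_zero (by omega)
  have hle : l.rowLen (x + 1) ≤ l.rowLen x := l.rowLen_anti x (x + 1) (by omega)
  have hxk : l.rowLen x ≤ k := hrk ▸ l.rowLen_anti r x hx
  have htel : ∏ j ∈ Ico (l.rowLen (x + 1)) (l.rowLen x),
      brk (k - (j + 1)) (l.colLen j - r) / brk (k - j) (l.colLen j - r) =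
        brk (k - l.rowLen x) (x + 1 - r) / brk (k - l.rowLen (x + 1)) (x + 1 - r) := by
    rw [← prod_Ico_div_of_ne_zero hf hle]
    refine prod_congr rfl fun j hj => ?_
    rw [mem_Ico] at hj
    rw [YoungDiagram.colLen_eq_of_rowLen_le_of_lt hj.1 hj.2]
  rw [rowFactor, ← prod_Ico_consecutive _ hle hxk, htel, ← rowFactor]
  field_simp [hf]

theorem colFactor_mul_brk_succ (hkr : l.colLen k = r) {y : ℕ} (hy : k ≤ y) :
    colFactor l r k (l.colLen (y + 1)) * brk (y + 1 - k) (r - l.colLen (y + 1)) =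
      colFactor l r k (l.colLen y) * brk (y + 1 - k) (r - l.colLen y) := by
  have hf : ∀ i, brk (y + 1 - k) (r - i) ≠ 0 := fun i => brk_ne_zero (by omega)
  have hle : l.colLen (y + 1) ≤ l.colLen y := l.colLen_anti y (y + 1) (by omega)
  have hyr : l.colLen y ≤ r := hkr ▸ l.colLen_anti k y hy
  have htel : ∏ i ∈ Ico (l.colLen (y + 1)) (l.colLen y),
      brk (l.rowLen i - k) (r - (i + 1)) / brk (l.rowLen i - k) (r - i) =
        brk (y + 1 - k) (r - l.colLen y) / brk (y + 1 - k) (r - l.colLen (y + 1)) := by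
    rw [← prod_Ico_div_of_ne_zero hf hle]
    refine prod_congr rfl fun i hi => ?_
    rw [mem_Ico] at hi
    rw [YoungDiagram.rowLen_eq_of_colLen_le_of_lt hi.1 hi.2]
  rw [colFactor, ← prod_Ico_consecutive _ hle hyr, htel, ← colFactor]
  field_simp [hf]

theorem sum_Ico_mul_rowFactor (hrk : l.rowLen r = k) {x : ℕ} (hx : r ≤ x) :
    ∑ i ∈ Ico r x, t ^ (x - i - 1) * (1 - t) * rowFactor l r k (l.rowLen i) =
      rowFactor l r k (l.rowLen x) * brk (k - l.rowLen x) (x - r) := by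
  induction x, hx using Nat.le_induction with
  | base => simp [brk, hrk]
  | succ x hx ih =>
    have hshift :
        ∑ i ∈ Ico r x, t ^ (x + 1 - i - 1) * (1 - t) * rowFactor l r k (l.rowLen i) =
        t * ∑ i ∈ Ico r x, t ^ (x - i - 1) * (1 - t) * rowFactor l r k (l.rowLen i) := by
      rw [mul_sum]
      refine sum_congr rfl fun i hi => ?_
      rw [show x + 1 - i - 1 = x - i - 1 + 1 by grind, pow_succ]
      ring
    rw [sum_Ico_succ_top hx, hshift, ih, rowFactor_mul_brk_succ hrk hx,
      show x + 1 - x - 1 = 0 by omega, show x + 1 - r = x - r + 1 by omega]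
    simp only [brk, pow_zero, pow_succ]
    ring

theorem sum_Ico_mul_colFactor (hkr : l.colLen k = r) {y : ℕ} (hy : k ≤ y) :
    ∑ j ∈ Ico k y,
        q ^ (j - k) * (1 - q) * (t ^ (r - l.colLen j) * colFactor l r k (l.colLen j)) =
      colFactor l r k (l.colLen y) * brk (y - k) (r - l.colLen y) := by
  induction y, hy using Nat.le_induction with
  | base => simp [brk, hkr]
  | succ y hy ih =>
    rw [sum_Ico_succ_top hy, ih, colFactor_mul_brk_succ hkr hy,
      show y + 1 - k = y - k + 1 by omega]
    simp only [brk, pow_succ]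
    ring

end Factors

def exitProb (l : YoungDiagram) (r k : ℕ) (c : ℕ × ℕ) : K :=
  if r ≤ c.1 ∧ k ≤ c.2 then
    t ^ (r - l.colLen c.2) * (rowFactor l r k (l.rowLen c.1) * colFactor l r k (l.colLen c.2))
  else 0

section ExitProb

open YoungDiagram

variable {l : YoungDiagram} {r k : ℕ} (hrk : l.rowLen r = k) (hkr : l.colLen k = r)
include hrk hkr

theorem exitProb_of_corner {c : ℕ × ℕ} (hc : c ∉ l.cells) (hA : extA l c = 0)
    (hL : extL l c = 0) : exitProb l r k c = if c = (r, k) then 1 else 0 := by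
  obtain ⟨x, y⟩ := c
  rw [mem_cells] at hc
  have hy : l.rowLen x = y := by have := rowLen_le_of_notMem hc; simp only [extA] at hA; omega
  have hx : l.colLen y = x := by have := colLen_le_of_notMem hc; simp only [extL] at hL; omega
  split_ifs with hxy
  · simp only [Prod.mk.injEq] at hxy
    obtain ⟨rfl, rfl⟩ := hxy
    simp [exitProb, rowFactor, colFactor, hrk, hkr]
  · refine if_neg fun ⟨hrx, hky⟩ => hxy ?_
    have hyk : y = k := le_antisymm (hy ▸ hrk ▸ l.rowLen_anti r x hrx) hky
    rw [← hx, hyk, hkr]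

theorem sum_arm_exitProb {x y : ℕ} (hrx : r ≤ x) (hky : k ≤ y) :
    ∑ j ∈ Ico (l.rowLen x) y, q ^ (j - l.rowLen x) * (1 - q) * exitProb l r k (x, j) =
      q ^ (k - l.rowLen x) * rowFactor l r k (l.rowLen x) *
        (colFactor l r k (l.colLen y) * brk (y - k) (r - l.colLen y)) := by
  have hxk : l.rowLen x ≤ k := hrk ▸ l.rowLen_anti r x hrx
  have hbelow : ∀ j ∈ Ico (l.rowLen x) k,
      q ^ (j - l.rowLen x) * (1 - q) * exitProb l r k (x, j) = 0 := fun j hj => by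
    rw [exitProb, if_neg (by simp only [mem_Ico] at hj ⊢; omega), mul_zero]
  rw [← sum_Ico_consecutive _ hxk hky, sum_eq_zero hbelow, zero_add,
    ← sum_Ico_mul_colFactor hkr hky, mul_sum]
  refine sum_congr rfl fun j hj => ?_
  rw [mem_Ico] at hj
  rw [exitProb, if_pos ⟨hrx, hj.1⟩, show j - l.rowLen x = k - l.rowLen x + (j - k) by omega,
    pow_add]
  ring

theorem sum_leg_exitProb {x y : ℕ} (hrx : r ≤ x) (hky : k ≤ y) :
    ∑ i ∈ Ico (l.colLen y) x, t ^ (x - i - 1) * (1 - t) * exitProb l r k (i, y) =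
      t ^ (r - l.colLen y) * colFactor l r k (l.colLen y) *
        (rowFactor l r k (l.rowLen x) * brk (k - l.rowLen x) (x - r)) := by
  have hyr : l.colLen y ≤ r := hkr ▸ l.colLen_anti k y hky
  have hbelow : ∀ i ∈ Ico (l.colLen y) r,
      t ^ (x - i - 1) * (1 - t) * exitProb l r k (i, y) = 0 := fun i hi => by
    rw [exitProb, if_neg (by simp only [mem_Ico] at hi ⊢; omega), mul_zero]
  rw [← sum_Ico_consecutive _ hyr hrx, sum_eq_zero hbelow, zero_add,
    ← sum_Ico_mul_rowFactor hrk hrx, mul_sum]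
  refine sum_congr rfl fun i hi => ?_
  rw [mem_Ico] at hi
  rw [exitProb, if_pos ⟨hi.1, hky⟩]
  ring

theorem exitProb_harmonic : HookWalkHarmonic l (exitProb l r k) := by
  rintro ⟨x, y⟩ hc hcor
  rw [mem_cells] at hc
  have hρ := rowLen_le_of_notMem hc
  have hσ := colLen_le_of_notMem hc
  set D := brk (extA l (x, y)) (extL l (x, y))
  have hD : D ≠ 0 := brk_ne_zero (by omega)
  have harm : ∑ j ∈ Ico (l.rowLen x) y, stepP l (x, y) (x, j) * exitProb l r k (x, j) =
      t ^ extL l (x, y) / D *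
        ∑ j ∈ Ico (l.rowLen x) y, q ^ (j - l.rowLen x) * (1 - q) * exitProb l r k (x, j) := by
    rw [mul_sum]
    refine sum_congr rfl fun j _ => ?_
    rw [stepP, if_pos rfl]
    simp only [D, brk]
    ring
  have hleg : ∑ i ∈ Ico (l.colLen y) x, stepP l (x, y) (i, y) * exitProb l r k (i, y) =
      1 / D * ∑ i ∈ Ico (l.colLen y) x, t ^ (x - i - 1) * (1 - t) * exitProb l r k (i, y) := by
    rw [mul_sum]
    refine sum_congr rfl fun i hi => ?_
    rw [stepP, if_neg (by simp only [mem_Ico] at hi ⊢; omega)]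
    simp only [D, brk]
    ring
  rw [sum_extArm_union_extLeg, harm, hleg]
  by_cases hreg : r ≤ x ∧ k ≤ y
  · have hxk : l.rowLen x ≤ k := hrk ▸ l.rowLen_anti r x hreg.1
    have hyr : l.colLen y ≤ r := hkr ▸ l.colLen_anti k y hreg.2
    rw [sum_arm_exitProb hrk hkr hreg.1 hreg.2, sum_leg_exitProb hrk hkr hreg.1 hreg.2, exitProb,
      if_pos hreg]
    have hA : extA l (x, y) = (y - k) + (k - l.rowLen x) := by simp only [extA]; omega
    have hL : extL l (x, y) = (x - r) + (r - l.colLen y) := by simp only [extL]; omega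
    simp only [D, hA, hL, brk, pow_add] at hD ⊢
    rw [div_mul_eq_mul_div, one_div_mul_eq_div, ← add_div, eq_div_iff hD]
    ring
  · have hzero : ∀ i j, i ≤ x → j ≤ y → exitProb l r k (i, j) = 0 := fun i j hi hj => by
      rw [exitProb, if_neg (by simp only; omega)]
    rw [hzero x y le_rfl le_rfl, sum_eq_zero fun j hj => ?_, sum_eq_zero fun i hi => ?_]
    · simp
    · rw [hzero i y (mem_Ico.mp hi).2.le le_rfl, mul_zero]
    · rw [hzero x j le_rfl (mem_Ico.mp hj).2.le, mul_zero]

theorem exitProb_of_colLen_zero_le_of_rowLen_zero_le {c : ℕ × ℕ} (h1 : l.colLen 0 ≤ c.1)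
    (h2 : l.rowLen 0 ≤ c.2) :
    exitProb l r k c = t ^ r * (rowFactor l r k 0 * colFactor l r k 0) := by
  have hrow : l.rowLen c.1 = 0 :=
    Nat.eq_zero_of_le_zero (rowLen_le_of_notMem (mt mem_iff_lt_colLen.mp (by omega)))
  have hcol : l.colLen c.2 = 0 :=
    Nat.eq_zero_of_le_zero (colLen_le_of_notMem (mt mem_iff_lt_rowLen.mp (by omega)))
  have hr : r ≤ c.1 := hkr ▸ (l.colLen_anti 0 k k.zero_le).trans h1
  have hk : k ≤ c.2 := hrk ▸ (l.rowLen_anti 0 r r.zero_le).trans h2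
  rw [exitProb, if_pos ⟨hr, hk⟩, hrow, hcol, Nat.sub_zero]

end ExitProb

namespace YoungDiagram

variable {μ ν : YoungDiagram} {r k : ℕ} (hd : (r, k) ∉ μ.cells)
  (hν : ν.cells = insert (r, k) μ.cells)
include hd hν

theorem nstat_sub_of_cells_eq_insert : nstat ν - nstat μ = r := by
  have hleg : ∀ c ∈ μ.cells, (leg ν c : ℤ) = leg μ c + if c.2 = k then 1 else 0 := by
    rintro ⟨i, j⟩ hc
    split_ifs with hj
    · subst hj
      have hi : i < r :=
        colLen_eq_of_cells_eq_insert hd hν ▸ mem_iff_lt_colLen.mp ((mem_cells _).mp hc)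
      simp only [leg, colLen_insert_self hd hν, colLen_eq_of_cells_eq_insert hd hν]
      omega
    · simp [leg, colLen_insert_of_ne hν hj]
  have hcorner : leg ν (r, k) = 0 := by simp [leg, colLen_insert_self hd hν]
  rw [nstat, nstat, hν, sum_insert hd, hcorner, sum_congr rfl hleg,
    sum_add_distrib, sum_boole, show μ.cells.filter (fun c => c.2 = k) = μ.col k from rfl,
    ← colLen_eq_card, colLen_eq_of_cells_eq_insert hd hν]
  ring

theorem alph_eq_of_cells_eq_insert : alph μ ν = rowFactor μ r k 0 * colFactor μ r k 0 := by
  have hsdiff : ν.cells \ μ.cells = {(r, k)} := by rw [hν, insert_sdiff_cancel hd]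
  have hR : Rset μ ν = μ.row r := by ext c; simp [Rset, hsdiff, row, eq_comm]
  have hC : Cset μ ν = μ.col k := by ext c; simp [Cset, hsdiff, col, eq_comm]
  rw [alph, hR, hC, row_eq_prod, col_eq_prod, prod_product, prod_product_right, prod_singleton,
    prod_singleton, rowLen_eq_of_cells_eq_insert hd hν, colLen_eq_of_cells_eq_insert hd hν,
    rowFactor, colFactor, range_eq_Ico, range_eq_Ico]
  congr 1
  · refine prod_congr rfl fun j hj => ?_
    rw [mem_Ico] at hj
    have hrj : r < μ.colLen j := mem_iff_lt_colLen.mp (mem_iff_lt_rowLen.mpr (by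
      rw [rowLen_eq_of_cells_eq_insert hd hν]; exact hj.2))
    simp only [arm, leg, rowLen_eq_of_cells_eq_insert hd hν, rowLen_insert_self hd hν,
      colLen_insert_of_ne hν hj.2.ne]
    congr 2 <;> omega
  · refine prod_congr rfl fun i hi => ?_
    rw [mem_Ico] at hi
    have hki : k < μ.rowLen i := mem_iff_lt_rowLen.mp (mem_iff_lt_colLen.mpr (by
      rw [colLen_eq_of_cells_eq_insert hd hν]; exact hi.2))
    simp only [arm, leg, colLen_eq_of_cells_eq_insert hd hν, colLen_insert_self hd hν,
      rowLen_insert_of_ne hν hi.2.ne]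
    congr 2 <;> omega

end YoungDiagram

/-- Theorem 6.5 (`(q,t)`-hook walk): suppose `Q : λ̄ × U(λ) → ℚ(q,t)` satisfies the exterior
`(q,t)`-hook-walk recursion: `Q(ν|c) = 1` if `c` is the outer corner `ν/λ`; `Q(ν|c) = 0` if
`c` is an outer corner of `λ` (i.e. `a(c) = ℓ(c) = 0`) with `λ ∪ {c} ≠ ν`; and
`Q(ν|c) = ∑_{c' ∈ arm_λ(c) ∪ leg_λ(c)} P(c→c') Q(ν|c')` if `c` is not an outer corner.
Then for every cell `c = (row, col) ∉ λ` with `col ≥ λ₁` and `row ≥ λ'₁` (i.e. the Cartesian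
coordinates satisfy `x > λ₁`, `y > λ'₁`) and every `ν ∈ U(λ)`,
`Q(ν|c) = t^{n(ν/λ)} α_{ν/λ}(q,t)`. -/
theorem qt_hook_walk (l : YoungDiagram) (Q : (ℕ × ℕ) → YoungDiagram → K)
    (hone : ∀ ν : YoungDiagram, Covers l ν → ∀ c : ℕ × ℕ, c ∉ l.cells →
      ν.cells = insert c l.cells → Q c ν = 1)
    (hzero : ∀ ν : YoungDiagram, Covers l ν → ∀ c : ℕ × ℕ, c ∉ l.cells →
      extA l c = 0 → extL l c = 0 → ν.cells ≠ insert c l.cells → Q c ν = 0)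
    (hrec : ∀ ν : YoungDiagram, Covers l ν → ∀ c : ℕ × ℕ, c ∉ l.cells →
      ¬(extA l c = 0 ∧ extL l c = 0) →
      Q c ν = ∑ c' ∈ extArm l c ∪ extLeg l c, stepP l c c' * Q c' ν) :
    ∀ ν : YoungDiagram, Covers l ν → ∀ c : ℕ × ℕ, c ∉ l.cells →
      l.rowLen 0 ≤ c.2 → l.colLen 0 ≤ c.1 →
      Q c ν = t ^ (nstat ν - nstat l) * alph l ν := by
  intro ν hcov c hc hc2 hc1
  obtain ⟨⟨r, k⟩, hd, hν⟩ := hcov.exists_cells_eq_insert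
  have hrk := YoungDiagram.rowLen_eq_of_cells_eq_insert hd hν
  have hkr := YoungDiagram.colLen_eq_of_cells_eq_insert hd hν
  have hQ : ∀ c ∉ l.cells, Q c ν = exitProb l r k c := by
    refine HookWalkHarmonic.eqOn_of_eqOn_corners (F := fun c => Q c ν) (hrec ν hcov)
      (exitProb_harmonic hrk hkr) fun c hc hA hL => ?_
    rw [exitProb_of_corner hrk hkr hc hA hL]
    split_ifs with hcd
    · exact hone ν hcov c hc (hcd ▸ hν)
    · exact hzero ν hcov c hc hA hL fun h =>
        hcd ((insert_inj hd).mp (hν.symm.trans h)).symm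
  rw [hQ c hc, exitProb_of_colLen_zero_le_of_rowLen_zero_le hrk hkr hc1 hc2,
    YoungDiagram.nstat_sub_of_cells_eq_insert hd hν,
    YoungDiagram.alph_eq_of_cells_eq_insert hd hν, zpow_natCast]
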